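/- Let L ≥ 1, let d_1,…,d_L be positive integers, and let F : ℝ^{d_1} × ⋯ × ℝ^{d_L} → ℝ be such that for each l and each fixed choice of the other blocks, the map on the l-th block is twice continuously differentiable. Suppose there are positive real numbers λ_1,…,λ_L such that F(w_1,…,w_L) = F(λ_1 w_1,…,λ_L w_L) for all (w_1,…,w_L). Define κ^l(v) := ‖v_l‖² · λ_max(H_l(v)) where H_l(v) is the Hessian of F with respect to the l-th block at v. Then the network-wise measures κ^max(v) := max_{1≤l≤L} κ^l(v) and κ^Σ(v) := Σ_{l=1}^L κ^l(v) satisfy κ^max(w) = κ^max(w^λ) and κ^Σ(w) = κ^Σ(w^λ), where w^λ = (λ_1 w_1,…,λ_L w_L). -/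

import Mathlib

/-- The largest eigenvalue of a (symmetric) real matrix, as the supremum of its
eigenvalue set. -/
noncomputable def lambdaMax {ι : Type*} [Fintype ι] [DecidableEq ι]
    (A : Matrix ι ι ℝ) : ℝ :=
  sSup {μ : ℝ | Module.End.HasEigenvalue (Matrix.toLin' A) μ}

/-- The Hessian matrix of `F : ℝ^ι → ℝ` at the point `u`, given by the matrix of
second partial derivatives. -/
noncomputable def hessianMatrix {ι : Type*} [Fintype ι] [DecidableEq ι]
    (F : EuclideanSpace ℝ ι → ℝ) (u : EuclideanSpace ℝ ι) : Matrix ι ι ℝ :=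
  Matrix.of fun i j =>
    fderiv ℝ (fun x => fderiv ℝ F x (EuclideanSpace.single j 1)) u
      (EuclideanSpace.single i 1)

/-- The layer-wise flatness measure `κ^l(v) = ‖v_l‖² · λ_max(H_l(v))`, where
`H_l(v)` is the Hessian of `F` with respect to the `l`-th block at `v`. -/
noncomputable def kappa {L : ℕ} {d : Fin L → ℕ}
    (F : (∀ l : Fin L, EuclideanSpace ℝ (Fin (d l))) → ℝ)
    (l : Fin L) (v : ∀ l : Fin L, EuclideanSpace ℝ (Fin (d l))) : ℝ :=
  ‖v l‖ ^ 2 * lambdaMax (hessianMatrix (fun u => F (Function.update v l u)) (v l))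
open Pointwise



lemma fderiv_smul_arg {E F : Type*} [NormedAddCommGroup E] [NormedSpace ℝ E]
    [NormedAddCommGroup F] [NormedSpace ℝ F] (g : E → F) (hg : Differentiable ℝ g)
    (c : ℝ) (x : E) :
    fderiv ℝ (fun y => g (c • y)) x = c • fderiv ℝ g (c • x) := by
  have h1 : HasFDerivAt (fun y : E => c • y) (c • ContinuousLinearMap.id ℝ E) x :=
    (hasFDerivAt_id x).const_smul c
  have h2 : HasFDerivAt (fun y => g (c • y))
      ((fderiv ℝ g (c • x)).comp (c • ContinuousLinearMap.id ℝ E)) x :=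
    (hg (c • x)).hasFDerivAt.comp x h1
  rw [h2.fderiv]
  ext v
  simp

lemma hessianMatrix_smul_arg {ι : Type*} [Fintype ι] [DecidableEq ι]
    (G : EuclideanSpace ℝ ι → ℝ) (hG : ContDiff ℝ 2 G) (c : ℝ) (v : EuclideanSpace ℝ ι) :
    hessianMatrix (fun u => G (c • u)) v = (c ^ 2) • hessianMatrix G (c • v) := by
  have hg : Differentiable ℝ G := hG.differentiable two_ne_zero
  have hfd : Differentiable ℝ (fderiv ℝ G) :=
    (hG.fderiv_right (m := 1) (by norm_num)).differentiable one_ne_zero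
  ext i j
  have hj : Differentiable ℝ (fun y => fderiv ℝ G y (EuclideanSpace.single j 1)) := by
    exact (ContinuousLinearMap.apply ℝ ℝ (EuclideanSpace.single j 1)).differentiable.comp hfd
  have hinner : (fun x => fderiv ℝ (fun u => G (c • u)) x (EuclideanSpace.single j 1))
      = fun x => c * fderiv ℝ G (c • x) (EuclideanSpace.single j 1) := by
    funext x
    rw [fderiv_smul_arg G hg c x]
    simp
  have hcomp : Differentiable ℝ (fun x : EuclideanSpace ℝ ι =>
      fderiv ℝ G (c • x) (EuclideanSpace.single j 1)) :=
    hj.comp (differentiable_id.const_smul c)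
  calc hessianMatrix (fun u => G (c • u)) v i j
      = fderiv ℝ (fun x => c * fderiv ℝ G (c • x) (EuclideanSpace.single j 1)) v
          (EuclideanSpace.single i 1) := by
        simp only [hessianMatrix, Matrix.of_apply, hinner]
    _ = c * (fderiv ℝ (fun x => fderiv ℝ G (c • x) (EuclideanSpace.single j 1)) v
          (EuclideanSpace.single i 1)) := by
        rw [fderiv_const_mul (hcomp v) c]; simp
    _ = c * (c * fderiv ℝ (fun y => fderiv ℝ G y (EuclideanSpace.single j 1)) (c • v)
          (EuclideanSpace.single i 1)) := by
        rw [fderiv_smul_arg _ hj c v]; simp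
    _ = (c ^ 2 • hessianMatrix G (c • v)) i j := by
        simp [hessianMatrix, Matrix.smul_apply]; ring

lemma lambdaMax_smul {ι : Type*} [Fintype ι] [DecidableEq ι]
    (A : Matrix ι ι ℝ) {c : ℝ} (hc : 0 < c) :
    lambdaMax (c • A) = c * lambdaMax A := by
  have key : ∀ μ : ℝ, Module.End.HasEigenvalue (Matrix.toLin' (c • A)) μ
      ↔ Module.End.HasEigenvalue (Matrix.toLin' A) (c⁻¹ * μ) := by
    intro μ
    rw [map_smul]
    constructor
    · rintro h
      obtain ⟨x, hx⟩ := h.exists_hasEigenvector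
      refine Module.End.hasEigenvalue_of_hasEigenvector
        ⟨Module.End.mem_eigenspace_iff.2 ?_, hx.2⟩
      have hxe := Module.End.mem_eigenspace_iff.1 hx.1
      simp only [LinearMap.smul_apply] at hxe
      have : Matrix.toLin' A x = c⁻¹ • (μ • x) := by
        rw [← hxe, smul_smul, inv_mul_cancel₀ hc.ne', one_smul]
      rw [this, smul_smul]
    · rintro h
      obtain ⟨x, hx⟩ := h.exists_hasEigenvector
      refine Module.End.hasEigenvalue_of_hasEigenvector
        ⟨Module.End.mem_eigenspace_iff.2 ?_, hx.2⟩
      have hxe := Module.End.mem_eigenspace_iff.1 hx.1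
      simp only [LinearMap.smul_apply]
      rw [hxe, smul_smul, mul_inv_cancel_left₀ hc.ne']
  have hset : {μ : ℝ | Module.End.HasEigenvalue (Matrix.toLin' (c • A)) μ}
      = c • {μ : ℝ | Module.End.HasEigenvalue (Matrix.toLin' A) μ} := by
    ext μ
    rw [Set.mem_smul_set_iff_inv_smul_mem₀ hc.ne']
    simpa [smul_eq_mul] using key μ
  rw [lambdaMax, hset, Real.sSup_smul_of_nonneg hc.le]
  rfl
lemma kappa_layer_invariant {L : ℕ} {d : Fin L → ℕ}
    (F : (∀ l : Fin L, EuclideanSpace ℝ (Fin (d l))) → ℝ)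
    (hF : ∀ (l : Fin L) (w : ∀ l : Fin L, EuclideanSpace ℝ (Fin (d l))),
      ContDiff ℝ 2 (fun u => F (Function.update w l u)))
    (lam : Fin L → ℝ) (hlam : ∀ l, 0 < lam l)
    (hinv : ∀ w : ∀ l : Fin L, EuclideanSpace ℝ (Fin (d l)),
      F w = F (fun l => lam l • w l))
    (l : Fin L) (w : ∀ l : Fin L, EuclideanSpace ℝ (Fin (d l))) :
    kappa F l w = kappa F l (fun k => lam k • w k) := by
  set wl : ∀ k : Fin L, EuclideanSpace ℝ (Fin (d k)) := fun k => lam k • w k with hwl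
  set G : EuclideanSpace ℝ (Fin (d l)) → ℝ := fun u => F (Function.update wl l u) with hG
  have hfun : (fun u => F (Function.update w l u)) = fun u => G (lam l • u) := by
    funext u
    rw [hinv (Function.update w l u)]
    simp only [hG]
    congr 1
    funext k
    rcases eq_or_ne k l with rfl | hk
    · simp
    · simp [Function.update_of_ne hk, hwl]
  have hH : hessianMatrix (fun u => F (Function.update w l u)) (w l)
      = (lam l ^ 2) • hessianMatrix G (lam l • w l) := by
    rw [hfun]
    exact hessianMatrix_smul_arg G (hF l wl) (lam l) (w l)
  have hc2 : (0 : ℝ) < lam l ^ 2 := pow_pos (hlam l) 2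
  have hwll : wl l = lam l • w l := rfl
  rw [kappa, kappa, hH, lambdaMax_smul _ hc2, hwll, ← hG]
  rw [norm_smul]
  have : |lam l| = lam l := abs_of_pos (hlam l)
  rw [Real.norm_eq_abs, this]
  ring

/-- Invariance of the network-wise flatness measures `κ^max = max_l κ^l` and
`κ^Σ = Σ_l κ^l` under layer-wise multiplication by positive scalars leaving `F`
invariant. -/
theorem kappaMax_kappaSum_invariant_under_layerwise_reparameterization
    {L : ℕ} (hL : 1 ≤ L) (d : Fin L → ℕ) (hd : ∀ l, 0 < d l)
    (F : (∀ l : Fin L, EuclideanSpace ℝ (Fin (d l))) → ℝ)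
    (hF : ∀ (l : Fin L) (w : ∀ l : Fin L, EuclideanSpace ℝ (Fin (d l))),
      ContDiff ℝ 2 (fun u => F (Function.update w l u)))
    (lam : Fin L → ℝ) (hlam : ∀ l, 0 < lam l)
    (hinv : ∀ w : ∀ l : Fin L, EuclideanSpace ℝ (Fin (d l)),
      F w = F (fun l => lam l • w l)) :
    ∀ w : ∀ l : Fin L, EuclideanSpace ℝ (Fin (d l)),
      (Finset.univ.sup' ⟨⟨0, hL⟩, Finset.mem_univ _⟩ (fun l => kappa F l w) =
        Finset.univ.sup' ⟨⟨0, hL⟩, Finset.mem_univ _⟩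
          (fun l => kappa F l (fun k => lam k • w k))) ∧
      (∑ l : Fin L, kappa F l w = ∑ l : Fin L, kappa F l (fun k => lam k • w k)) := by
  intro w
  have hk : ∀ l, kappa F l w = kappa F l (fun k => lam k • w k) :=
    fun l => kappa_layer_invariant F hF lam hlam hinv l w
  constructor
  · exact Finset.sup'_congr _ rfl (fun l _ => hk l)
  · exact Finset.sum_congr rfl (fun l _ => hk l)
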